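/- Let a ∈ D with 0 < |a| < 1, and let λ, μ ∈ ℂ. For the function h(z) := λ + μ/(1−\bar{a}z) (which belongs to H^1), one has ‖h‖_1 ≥ (1/π)|λ+μ| + (1/(2π))·|μ|·log(1/(1−|a|)). -/

import Mathlib

open MeasureTheory Complex Set Metric ENNReal

noncomputable section

/-- Normalized Lebesgue (arclength) measure `m` on the unit circle `T`, as a measure on `ℂ`. -/
def circleMeasure : Measure ℂ :=
  (ENNReal.ofReal (2 * Real.pi))⁻¹ •
    Measure.map (fun t : ℝ => Complex.exp (t * Complex.I)) (volume.restrict (Ioc 0 (2 * Real.pi)))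

/-- The open unit disk `D`. -/
def unitDisk : Set ℂ := ball (0 : ℂ) 1

/-- `g` is, `m`-a.e. on the circle, the (radial) boundary-value function of `f`. -/
def IsBoundaryValue (f g : ℂ → ℂ) : Prop :=
  ∀ᵐ ζ ∂circleMeasure,
    Filter.Tendsto (fun r : ℝ => f (((r : ℂ)) * ζ)) (nhdsWithin 1 (Iio 1)) (nhds (g ζ))

/-- The Hardy norm `‖f‖_p`; for `p = ∞` it is the sup norm over the disk. -/
def hNorm (p : ℝ≥0∞) (f : ℂ → ℂ) : ℝ≥0∞ :=
  if p = ⊤ then ⨆ z : unitDisk, (‖f (z : ℂ)‖₊ : ℝ≥0∞)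
  else ⨆ r : Ioo (0 : ℝ) 1,
    (∫⁻ ζ, (‖f ((((r : ℝ) : ℂ)) * ζ)‖₊ : ℝ≥0∞) ^ p.toReal ∂circleMeasure) ^ (1 / p.toReal)

/-- Membership in the Hardy space `H^p` (with `f` identified with its boundary values,
i.e. the values of `f` on the circle are `m`-a.e. its radial limits from the disk). -/
def MemHp (p : ℝ≥0∞) (f : ℂ → ℂ) : Prop :=
  DifferentiableOn ℂ f unitDisk ∧ hNorm p f < ⊤ ∧ IsBoundaryValue f f

/-- Inner functions: bounded holomorphic with unimodular boundary values. -/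
def IsInner (θ : ℂ → ℂ) : Prop :=
  MemHp ⊤ θ ∧ ∀ᵐ ζ ∂circleMeasure, ‖θ ζ‖ = 1

/-- `θ` is nonconstant on the unit disk. -/
def Nonconstant (θ : ℂ → ℂ) : Prop := ¬ ∃ c : ℂ, ∀ z ∈ unitDisk, θ z = c

/-- Membership in the star-invariant subspace `K^p_θ`:  `f ∈ H^p` and the function
`ζ ↦ conj ζ * conj (f ζ) * θ ζ` on the circle coincides `m`-a.e. with (the boundary values of)
an `H^p` function. -/
def MemKp (p : ℝ≥0∞) (θ f : ℂ → ℂ) : Prop :=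
  MemHp p f ∧ ∃ h : ℂ → ℂ, MemHp p h ∧
    ∀ᵐ ζ ∂circleMeasure, h ζ = (starRingEnd ℂ) ζ * (starRingEnd ℂ) (f ζ) * θ ζ

/-- `u ∈ Re H^p`. -/
def MemReHp (p : ℝ≥0∞) (u : ℂ → ℝ) : Prop :=
  ∃ f : ℂ → ℂ, MemHp p f ∧ ∀ᵐ ζ ∂circleMeasure, u ζ = (f ζ).re

/-- `u ∈ Re K^p_θ`. -/
def MemReKp (p : ℝ≥0∞) (θ : ℂ → ℂ) (u : ℂ → ℝ) : Prop :=
  ∃ f : ℂ → ℂ, MemKp p θ f ∧ ∀ᵐ ζ ∂circleMeasure, u ζ = (f ζ).re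

/-!
After a rotation of the circle we may assume `conj a = t = ‖a‖ ∈ [0, 1)`, so that on the circle
`h(e^{iθ}) = λ + μ (1 - t e^{iθ})⁻¹`. Pair `h` with the test function
`G(θ) = U/π + V/(2π) · i(θ - π)`, where `‖U‖, ‖V‖ ≤ 1`; then `‖G‖ ≤ 1/π + 1/2 ≤ 1`, so
`∫ ‖h‖ ≥ ‖∫ G h‖`. The mean value property gives `∫ h = 2π (λ + μ)`, and integrating by parts
against the primitive `θ + i log (1 - t e^{iθ})` of the Cauchy kernel (whose logarithmic part has
mean zero) gives `∫ i(θ - π) h(θ) dθ = -2π μ log (1 - t)`. Choosing the unimodular `U`, `V` to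
align phases yields the bound. The sawtooth `i(θ - π) = ∑_{n ≠ 0} e^{inθ}/n` is what produces
the weights `1/n` of Hardy's inequality.
-/

open scoped Real

lemma exp_neg_arg_mul_I_mul (z : ℂ) : exp (-(arg z * I)) * z = ‖z‖ := by
  nth_rewrite 2 [← norm_mul_exp_arg_mul_I z]
  rw [mul_left_comm, ← Complex.exp_add, neg_add_cancel, Complex.exp_zero, mul_one]

lemma measurable_exp_ofReal_mul_I : Measurable fun t : ℝ => exp (t * I) := by fun_prop

instance : IsProbabilityMeasure circleMeasure := by
  constructor
  rw [circleMeasure, Measure.smul_apply, Measure.map_apply measurable_exp_ofReal_mul_I .univ,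
    preimage_univ, Measure.restrict_apply_univ, Real.volume_Ioc, sub_zero, smul_eq_mul,
    ENNReal.inv_mul_cancel (by simp [Real.pi_pos]) ofReal_ne_top]

lemma ae_norm_eq_one_circleMeasure : ∀ᵐ ζ ∂circleMeasure, ‖ζ‖ = 1 := by
  refine Measure.ae_smul_measure ?_ _
  rw [ae_map_iff measurable_exp_ofReal_mul_I.aemeasurable
    (isClosed_eq continuous_norm continuous_const).measurableSet]
  exact .of_forall fun t => by simp [Complex.norm_exp]

lemma integral_circleMeasure {E : Type*} [NormedAddCommGroup E] [NormedSpace ℝ E] {f : ℂ → E}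
    (hf : StronglyMeasurable f) : ∫ ζ, f ζ ∂circleMeasure = Real.circleAverage f 0 1 := by
  rw [circleMeasure, integral_smul_measure, integral_map measurable_exp_ofReal_mul_I.aemeasurable
    hf.aestronglyMeasurable, Real.circleAverage, intervalIntegral.integral_of_le Real.two_pi_pos.le,
    ENNReal.toReal_inv, ENNReal.toReal_ofReal Real.two_pi_pos.le]
  simp [circleMap_zero]

lemma closure_unitDisk : closure unitDisk = closedBall (0 : ℂ) 1 := closure_ball 0 one_ne_zero

section HardySpace

variable {f : ℂ → ℂ}

lemma hNorm_lt_top_of_norm_le {M : ℝ} (hM : ∀ z ∈ unitDisk, ‖f z‖ ≤ M) (p : ℝ≥0∞) :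
    hNorm p f < ⊤ := by
  have hM' : ∀ z ∈ unitDisk, (‖f z‖₊ : ℝ≥0∞) ≤ ENNReal.ofReal M := fun z hz => by
    rw [← enorm_eq_nnnorm, ← ofReal_norm]
    exact ofReal_le_ofReal (hM z hz)
  rw [hNorm]
  split_ifs
  · exact (iSup_le fun ⟨z, hz⟩ => hM' z hz).trans_lt ofReal_lt_top
  · have hB : (ENNReal.ofReal M ^ p.toReal) ^ (1 / p.toReal) < ⊤ :=
      rpow_lt_top_of_nonneg (by positivity) (rpow_ne_top_of_nonneg toReal_nonneg ofReal_ne_top)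
    refine (iSup_le fun r => ?_).trans_lt hB
    gcongr
    calc ∫⁻ ζ, (‖f (((r : ℝ) : ℂ) * ζ)‖₊ : ℝ≥0∞) ^ p.toReal ∂circleMeasure
        ≤ ∫⁻ _, ENNReal.ofReal M ^ p.toReal ∂circleMeasure := by
          refine lintegral_mono_ae ?_
          filter_upwards [ae_norm_eq_one_circleMeasure] with ζ hζ
          gcongr
          refine hM' _ ?_
          simp [unitDisk, hζ, abs_of_pos r.2.1, r.2.2]
      _ = ENNReal.ofReal M ^ p.toReal := by simp

lemma isBoundaryValue_self_of_continuousOn (hf : ContinuousOn f (closedBall 0 1)) :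
    IsBoundaryValue f f := by
  filter_upwards [ae_norm_eq_one_circleMeasure] with ζ hζ
  have hζ' : ζ ∈ closedBall (0 : ℂ) 1 := by simp [hζ]
  refine (hf ζ hζ').tendsto.comp (tendsto_nhdsWithin_iff.2 ⟨?_, ?_⟩)
  · simpa using ((Complex.continuous_ofReal.tendsto 1).mul_const ζ).mono_left nhdsWithin_le_nhds
  · filter_upwards [Ioo_mem_nhdsLT (show (0 : ℝ) < 1 by norm_num)] with r hr
    simp [hζ, abs_of_pos hr.1, hr.2.le]

lemma DiffContOnCl.memHp (hf : DiffContOnCl ℂ f unitDisk) (p : ℝ≥0∞) : MemHp p f := by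
  have hcont : ContinuousOn f (closedBall 0 1) := closure_unitDisk ▸ hf.continuousOn
  obtain ⟨M, hM⟩ := (isCompact_closedBall (0 : ℂ) 1).exists_bound_of_continuousOn hcont
  exact ⟨hf.differentiableOn,
    hNorm_lt_top_of_norm_le (fun z hz => hM z (ball_subset_closedBall hz)) p,
    isBoundaryValue_self_of_continuousOn hcont⟩

end HardySpace

section CauchyKernel

variable {c : ℂ}

lemma one_sub_mul_mem_slitPlane (hc : ‖c‖ < 1) {z : ℂ} (hz : z ∈ closedBall (0 : ℂ) 1) :
    1 - c * z ∈ slitPlane := by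
  rw [sub_eq_add_neg]
  refine mem_slitPlane_of_norm_lt_one ?_
  rw [norm_neg, norm_mul]
  exact (mul_le_of_le_one_right (norm_nonneg c) (mem_closedBall_zero_iff.1 hz)).trans_lt hc

lemma diffContOnCl_inv_one_sub_mul (hc : ‖c‖ < 1) :
    DiffContOnCl ℂ (fun z => (1 - c * z)⁻¹) unitDisk := by
  refine DifferentiableOn.diffContOnCl fun z hz => ?_
  rw [closure_unitDisk] at hz
  exact (((differentiableAt_id.const_mul c).const_sub 1).inv
    (slitPlane_ne_zero (one_sub_mul_mem_slitPlane hc hz))).differentiableWithinAt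

lemma diffContOnCl_log_one_sub_mul (hc : ‖c‖ < 1) :
    DiffContOnCl ℂ (fun z => Complex.log (1 - c * z)) unitDisk := by
  refine DifferentiableOn.diffContOnCl fun z hz => ?_
  rw [closure_unitDisk] at hz
  exact (((differentiableAt_id.const_mul c).const_sub 1).clog
    (one_sub_mul_mem_slitPlane hc hz)).differentiableWithinAt

lemma integral_eq_two_pi_mul_of_diffContOnCl {f : ℂ → ℂ} (hf : DiffContOnCl ℂ f unitDisk) :
    ∫ θ in 0..2 * π, f (circleMap 0 1 θ) = 2 * π * f 0 := by
  have hmean := (show DiffContOnCl ℂ f (ball 0 |1|) by rw [abs_one]; exact hf).circleAverage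
  rw [← hmean, Real.circleAverage_def, real_smul, ← mul_assoc]
  push_cast
  rw [mul_inv_cancel₀ (by exact_mod_cast Real.two_pi_pos.ne'), one_mul]

lemma continuous_inv_one_sub_mul_circleMap (hc : ‖c‖ < 1) :
    Continuous fun θ : ℝ => (1 - c * circleMap 0 1 θ)⁻¹ :=
  (continuous_const.sub (continuous_const.mul (continuous_circleMap 0 1))).inv₀ fun θ =>
    slitPlane_ne_zero (one_sub_mul_mem_slitPlane hc (circleMap_mem_closedBall 0 zero_le_one θ))

lemma hasDerivAt_add_I_mul_log_one_sub_mul_circleMap (hc : ‖c‖ < 1) (θ : ℝ) :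
    HasDerivAt (fun θ : ℝ => θ + I * Complex.log (1 - c * circleMap 0 1 θ))
      (1 - c * circleMap 0 1 θ)⁻¹ θ := by
  have hmem := one_sub_mul_mem_slitPlane hc (circleMap_mem_closedBall 0 zero_le_one θ)
  have hlog := (((hasDerivAt_circleMap 0 1 θ).const_mul c).const_sub 1).clog_real hmem
  refine ((hasDerivAt_id θ).ofReal_comp.add (hlog.const_mul I)).congr_deriv ?_
  push_cast
  field_simp [slitPlane_ne_zero hmem]
  linear_combination -(c * circleMap 0 1 θ) * I_sq

lemma integral_I_mul_sub_pi : ∫ θ in 0..2 * π, I * ((θ : ℂ) - π) = 0 := by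
  simp_rw [← Complex.ofReal_sub, intervalIntegral.integral_const_mul,
    intervalIntegral.integral_ofReal, intervalIntegral.integral_comp_sub_right (fun x : ℝ => x),
    integral_id]
  ring_nf
  simp

lemma integral_I_mul_sub_pi_mul_inv_one_sub_mul (hc : ‖c‖ < 1) :
    ∫ θ in 0..2 * π, I * ((θ : ℂ) - π) * (1 - c * circleMap 0 1 θ)⁻¹ =
      -(2 * π * Complex.log (1 - c)) := by
  have hsaw : ∀ θ : ℝ, HasDerivAt (fun θ : ℝ => I * ((θ : ℂ) - π)) I θ := fun θ => by
    simpa using ((ofRealCLM.hasDerivAt (x := θ)).sub_const (π : ℂ)).const_mul I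
  have hlog : ∫ θ in 0..2 * π, Complex.log (1 - c * circleMap 0 1 θ) = 0 := by
    simpa using integral_eq_two_pi_mul_of_diffContOnCl (diffContOnCl_log_one_sub_mul hc)
  have hlogc : Continuous fun θ : ℝ => Complex.log (1 - c * circleMap 0 1 θ) :=
    continuous_iff_continuousAt.2 fun θ => (by fun_prop : Continuous _).continuousAt.clog
      (one_sub_mul_mem_slitPlane hc (circleMap_mem_closedBall 0 zero_le_one θ))
  have hprim : ∫ θ in 0..2 * π, I * (θ + I * Complex.log (1 - c * circleMap 0 1 θ)) =
      2 * π ^ 2 * I := by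
    simp_rw [mul_add, ← mul_assoc, I_mul_I, neg_one_mul, ← sub_eq_add_neg]
    rw [intervalIntegral.integral_sub
      ((Complex.continuous_ofReal.const_mul I).intervalIntegrable _ _)
      (hlogc.intervalIntegrable _ _), intervalIntegral.integral_const_mul,
      intervalIntegral.integral_ofReal, integral_id, hlog]
    push_cast
    ring
  rw [intervalIntegral.integral_mul_deriv_eq_deriv_mul (fun θ _ => hsaw θ)
    (fun θ _ => hasDerivAt_add_I_mul_log_one_sub_mul_circleMap hc θ) intervalIntegrable_const
    ((continuous_inv_one_sub_mul_circleMap hc).intervalIntegrable _ _), hprim]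
  have h2π : circleMap 0 1 (2 * π) = 1 := by simp [circleMap_zero]
  simp only [h2π, circleMap_zero, Complex.ofReal_one, Complex.ofReal_zero, zero_mul,
    Complex.exp_zero, mul_one]
  push_cast
  linear_combination (2 * π * Complex.log (1 - c)) * I_sq

lemma integral_const_add_mul_inv_one_sub_mul_circleMap (hc : ‖c‖ < 1) (lam mu : ℂ) :
    ∫ θ in 0..2 * π, lam + mu * (1 - c * circleMap 0 1 θ)⁻¹ = 2 * π * (lam + mu) := by
  simpa using integral_eq_two_pi_mul_of_diffContOnCl
    (((diffContOnCl_inv_one_sub_mul hc).const_smul mu).const_add lam)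

lemma integral_I_mul_sub_pi_mul_const_add_mul_inv_one_sub_mul_circleMap (hc : ‖c‖ < 1)
    (lam mu : ℂ) :
    ∫ θ in 0..2 * π, I * ((θ : ℂ) - π) * (lam + mu * (1 - c * circleMap 0 1 θ)⁻¹) =
      -(2 * π * (mu * Complex.log (1 - c))) := by
  have hsaw : Continuous fun θ : ℝ => I * ((θ : ℂ) - π) := by fun_prop
  have hsawk : Continuous fun θ : ℝ => I * ((θ : ℂ) - π) * (1 - c * circleMap 0 1 θ)⁻¹ :=
    hsaw.mul (continuous_inv_one_sub_mul_circleMap hc)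
  simp_rw [mul_add, mul_left_comm _ mu]
  rw [intervalIntegral.integral_add ((hsaw.mul_const _).intervalIntegrable _ _)
    ((hsawk.const_mul _).intervalIntegrable _ _), intervalIntegral.integral_mul_const,
    intervalIntegral.integral_const_mul mu, integral_I_mul_sub_pi,
    integral_I_mul_sub_pi_mul_inv_one_sub_mul hc]
  ring

end CauchyKernel

lemma norm_div_pi_add_mul_I_mul_sub_pi_le_one {U V : ℂ} (hU : ‖U‖ ≤ 1) (hV : ‖V‖ ≤ 1) {θ : ℝ}
    (hθ : θ ∈ Icc 0 (2 * π)) : ‖U / π + V / (2 * π) * (I * ((θ : ℂ) - π))‖ ≤ 1 := by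
  have hdist : |θ - π| ≤ π := abs_le.2 ⟨by linarith [hθ.1], by linarith [hθ.2]⟩
  have hsaw : ‖V / (2 * π) * (I * ((θ : ℂ) - π))‖ ≤ 1 / 2 := by
    rw [← Complex.ofReal_sub, norm_mul, norm_mul, norm_I, one_mul, Complex.norm_real,
      Real.norm_eq_abs, norm_div, show (2 * π : ℂ) = ((2 * π : ℝ) : ℂ) by push_cast; rfl,
      Complex.norm_real, Real.norm_of_nonneg Real.two_pi_pos.le]
    calc ‖V‖ / (2 * π) * |θ - π| ≤ 1 / (2 * π) * π := by gcongr
      _ = 1 / 2 := by field_simp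
  have hconst : ‖U / π‖ ≤ 1 / 2 := by
    rw [norm_div, Complex.norm_real, Real.norm_of_nonneg Real.pi_pos.le]
    calc ‖U‖ / π ≤ 1 / π := by gcongr
      _ ≤ 1 / 2 := by gcongr; linarith [Real.pi_gt_three]
  calc _ ≤ ‖U / π‖ + ‖V / (2 * π) * (I * ((θ : ℂ) - π))‖ := norm_add_le _ _
    _ ≤ 1 := by linarith

lemma norm_add_div_pi_add_norm_log_le_circleAverage {c : ℂ} (hc : ‖c‖ < 1) (lam mu : ℂ) :
    ‖lam + mu‖ / π + ‖mu‖ * ‖Complex.log (1 - c)‖ / (2 * π) ≤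
      Real.circleAverage (fun z => ‖lam + mu * (1 - c * z)⁻¹‖) 0 1 := by
  set L := Complex.log (1 - c)
  set H : ℝ → ℂ := fun θ => lam + mu * (1 - c * circleMap 0 1 θ)⁻¹
  have hkc := continuous_inv_one_sub_mul_circleMap hc
  have hsawc : Continuous fun θ : ℝ => I * ((θ : ℂ) - π) := by fun_prop
  have hHc : Continuous H := continuous_const.add (continuous_const.mul hkc)
  set U := exp (-(arg (lam + mu) * I))
  set V := exp (-(arg (-(mu * L)) * I))
  have hU : ‖U‖ ≤ 1 := by simp [U, Complex.norm_exp]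
  have hV : ‖V‖ ≤ 1 := by simp [V, Complex.norm_exp]
  set G : ℝ → ℂ := fun θ => U / π + V / (2 * π) * (I * ((θ : ℂ) - π))
  have hpair : ∫ θ in 0..2 * π, G θ * H θ = ((2 * ‖lam + mu‖ + ‖mu‖ * ‖L‖ : ℝ) : ℂ) := by
    have hsplit : ∀ θ : ℝ, G θ * H θ = U / π * H θ + V / (2 * π) * (I * ((θ : ℂ) - π) * H θ) :=
      fun θ => by ring
    have hsawH : Continuous fun θ : ℝ => I * ((θ : ℂ) - π) * H θ := hsawc.mul hHc
    simp_rw [hsplit]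
    rw [intervalIntegral.integral_add ((hHc.const_mul _).intervalIntegrable _ _)
      ((hsawH.const_mul _).intervalIntegrable _ _), intervalIntegral.integral_const_mul (U / π),
      intervalIntegral.integral_const_mul (V / (2 * π)),
      integral_const_add_mul_inv_one_sub_mul_circleMap hc,
      integral_I_mul_sub_pi_mul_const_add_mul_inv_one_sub_mul_circleMap hc]
    have hπ : (π : ℂ) ≠ 0 := Complex.ofReal_ne_zero.2 Real.pi_ne_zero
    calc U / π * (2 * π * (lam + mu)) + V / (2 * π) * -(2 * π * (mu * L))
        = 2 * (U * (lam + mu)) + V * -(mu * L) := by field_simp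
      _ = _ := by
        rw [exp_neg_arg_mul_I_mul, exp_neg_arg_mul_I_mul, norm_neg, norm_mul]
        push_cast
        ring
  have hdual : ‖∫ θ in 0..2 * π, G θ * H θ‖ ≤ ∫ θ in 0..2 * π, ‖H θ‖ := by
    refine intervalIntegral.norm_integral_le_of_norm_le Real.two_pi_pos.le
      (.of_forall fun θ hθ => ?_) (hHc.norm.intervalIntegrable _ _)
    rw [norm_mul]
    exact mul_le_of_le_one_left (norm_nonneg _)
      (norm_div_pi_add_mul_I_mul_sub_pi_le_one hU hV (Ioc_subset_Icc_self hθ))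
  rw [hpair, Complex.norm_real, Real.norm_of_nonneg (by positivity)] at hdual
  rw [Real.circleAverage_def, smul_eq_mul]
  calc ‖lam + mu‖ / π + ‖mu‖ * ‖L‖ / (2 * π) = (2 * π)⁻¹ * (2 * ‖lam + mu‖ + ‖mu‖ * ‖L‖) := by
        field_simp
    _ ≤ _ := by gcongr

lemma circleAverage_comp_exp_mul {E : Type*} [NormedAddCommGroup E] [NormedSpace ℝ E]
    (f : ℂ → E) (η : ℝ) :
    Real.circleAverage (fun z => f (exp (η * I) * z)) 0 1 = Real.circleAverage f 0 1 := by
  rw [Real.circleAverage_eq_integral_add η (f := f), Real.circleAverage_def]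
  congr 2 with θ
  simp only [circleMap_zero, Complex.ofReal_one, one_mul, ← Complex.exp_add]
  push_cast
  ring_nf

theorem hardy_lower_bound_general (a : ℂ) (ha : ‖a‖ < 1) (lam mu : ℂ)
    (h : ℂ → ℂ) (hh : ∀ z : ℂ, h z = lam + mu * (1 - (starRingEnd ℂ) a * z)⁻¹) :
    MemHp 1 h ∧
    (1 / Real.pi) * ‖lam + mu‖ +
        (1 / (2 * Real.pi)) * ‖mu‖ * Real.log (1 / (1 - ‖a‖)) ≤
      ∫ ζ, ‖h ζ‖ ∂circleMeasure := by
  obtain rfl : h = fun z => lam + mu * (1 - (starRingEnd ℂ) a * z)⁻¹ := funext hh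
  have hc : ‖(starRingEnd ℂ) a‖ < 1 := by rwa [Complex.norm_conj]
  have hrot : ∀ z, (starRingEnd ℂ) a * (exp (↑(-arg ((starRingEnd ℂ) a)) * I) * z) = ‖a‖ * z := by
    intro z
    rw [← mul_assoc, mul_comm _ (exp _), Complex.ofReal_neg, neg_mul, exp_neg_arg_mul_I_mul,
      Complex.norm_conj]
  have h1a : 0 < 1 - ‖a‖ := by linarith
  have hlog : ‖Complex.log (1 - ‖a‖)‖ = Real.log (1 / (1 - ‖a‖)) := by
    rw [← Complex.ofReal_one, ← Complex.ofReal_sub, ← Complex.ofReal_log h1a.le, Complex.norm_real,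
      Real.norm_of_nonpos (Real.log_nonpos h1a.le (by linarith [norm_nonneg a])), one_div,
      Real.log_inv]
  refine ⟨(((diffContOnCl_inv_one_sub_mul hc).const_smul mu).const_add lam).memHp 1, ?_⟩
  rw [integral_circleMeasure (by fun_prop : Measurable _).norm.stronglyMeasurable,
    ← circleAverage_comp_exp_mul _ (-arg ((starRingEnd ℂ) a))]
  simp only [hrot]
  calc _ = ‖lam + mu‖ / π + ‖mu‖ * ‖Complex.log (1 - ‖a‖)‖ / (2 * π) := by rw [hlog]; ring
    _ ≤ _ := norm_add_div_pi_add_norm_log_le_circleAverage (by simpa using ha) lam mu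

/-- The lower bound, via Hardy's inequality, for the `H¹` norm of
`h(z) = λ + μ/(1 − conj a · z)` with `0 < |a| < 1`:
`‖h‖₁ ≥ (1/π)|λ+μ| + (1/(2π))|μ| log(1/(1−|a|))`. -/
theorem hardy_lower_bound (a : ℂ) (ha0 : a ≠ 0) (ha : ‖a‖ < 1) (lam mu : ℂ)
    (h : ℂ → ℂ) (hh : ∀ z : ℂ, h z = lam + mu * (1 - (starRingEnd ℂ) a * z)⁻¹) :
    MemHp 1 h ∧
    (1 / Real.pi) * ‖lam + mu‖ +
        (1 / (2 * Real.pi)) * ‖mu‖ * Real.log (1 / (1 - ‖a‖)) ≤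
      ∫ ζ, ‖h ζ‖ ∂circleMeasure :=
  hardy_lower_bound_general a ha lam mu h hh
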